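/- Let A be a von Neumann algebra on H and F ∈ A with closed range. Suppose D, F ∈ A with Im F, Im D, Im DF all closed. Let W̃ denote the orthogonal complement of ker F inside ker DF. Then F maps W̃ isomorphically onto ker D ∩ Im F, and consequently the projection P_{W̃} = P_{ker DF} − P_{ker F} is Murray–von Neumann equivalent in A to P_{ker D ∩ Im F}. -/

import Mathlib

/-!
`F` is injective on `(ker F)ᗮ`, and the part of a preimage lying in `ker F` can be discarded, so
`F` maps `W̃ = ker DF ⊓ (ker F)ᗮ` onto `ker D ⊓ range F`. Since `ker F ≤ ker DF`, the projection
onto `W̃` is `P_{ker DF} - P_{ker F}`; it lies in `A` because kernels of elements of `A` are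
invariant under the commutant.

For the equivalence put `T = F P_W̃`. By the open mapping theorem the bijection
`W̃ → ker D ⊓ range F` between closed subspaces is bounded below, so `S = T*T + (1 - P_W̃)` is
strictly positive, and `v = T S^{-1/2} ∈ A` satisfies `v*v = P_W̃` and
`range v = range T = ker D ⊓ range F`.
-/

variable {H : Type*} [NormedAddCommGroup H] [InnerProductSpace ℂ H] [CompleteSpace H]

/-- Murray–von Neumann equivalence of `p` and `q`, witnessed inside the set `S`. -/
def MvN {R : Type*} [Ring R] [StarRing R] (S : Set R) (p q : R) : Prop :=
  ∃ v ∈ S, v * star v = p ∧ star v * v = q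

/-- `P` is the orthogonal projection of `H` onto the subspace `K`. -/
def IsOrthProjOnto (P : H →L[ℂ] H) (K : Submodule ℂ H) : Prop :=
  P * P = P ∧ star P = P ∧ LinearMap.range (P : H →ₗ[ℂ] H) = K

open ContinuousLinearMap
open scoped NNReal

namespace IsOrthProjOnto

variable {P Q : H →L[ℂ] H} {K L : Submodule ℂ H}

theorem isStarProjection (h : IsOrthProjOnto P K) : IsStarProjection P := ⟨h.1, h.2.1⟩

theorem unique (hP : IsOrthProjOnto P K) (hQ : IsOrthProjOnto Q K) : P = Q :=
  (hP.isStarProjection.ext_iff hQ.isStarProjection).2 (hP.2.2.trans hQ.2.2.symm)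

theorem isClosed (h : IsOrthProjOnto P K) : IsClosed (K : Set H) :=
  h.2.2 ▸ IsIdempotentElem.isClosed_range h.1

theorem apply_mem (h : IsOrthProjOnto P K) (x : H) : P x ∈ K := h.2.2 ▸ ⟨x, rfl⟩

theorem apply_eq_self (h : IsOrthProjOnto P K) {x : H} (hx : x ∈ K) : P x = x :=
  (LinearMap.IsIdempotentElem.mem_range_iff h.isStarProjection.isIdempotentElem.toLinearMap).1
    (h.2.2 ▸ hx)

theorem apply_eq_zero_iff (h : IsOrthProjOnto P K) {x : H} : P x = 0 ↔ x ∈ Kᗮ := by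
  rw [← h.2.2, (isSelfAdjoint_iff_isSymmetric.1 h.2.1).orthogonal_range, LinearMap.mem_ker,
    coe_coe]

theorem sub (hP : IsOrthProjOnto P L) (hQ : IsOrthProjOnto Q K) (hKL : K ≤ L) :
    IsOrthProjOnto (P - Q) (L ⊓ Kᗮ) := by
  have hPQ : P * Q = Q := ext fun x ↦ hP.apply_eq_self (hKL (hQ.apply_mem x))
  have hQP : Q * P = Q := by simpa [hP.2.1, hQ.2.1] using congrArg star hPQ
  have hproj := hQ.isStarProjection.sub_of_mul_eq_left hP.isStarProjection hQP
  refine ⟨hproj.isIdempotentElem, hproj.isSelfAdjoint, le_antisymm ?_ fun x hx ↦ ⟨x, ?_⟩⟩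
  · rintro _ ⟨x, rfl⟩
    refine ⟨L.sub_mem (hP.apply_mem x) (hKL (hQ.apply_mem x)), hQ.apply_eq_zero_iff.1 ?_⟩
    simpa [hQP, hQ.1] using congrArg (· x) (mul_sub Q P Q)
  · simp [hP.apply_eq_self hx.1, hQ.apply_eq_zero_iff.2 hx.2]

theorem mem_of_ker {A : VonNeumannAlgebra H} {a : H →L[ℂ] H}
    (h : IsOrthProjOnto P (LinearMap.ker (a : H →ₗ[ℂ] H))) (ha : a ∈ A) : P ∈ A := by
  refine (VonNeumannAlgebra.IsStarProjection.mem_iff h.isStarProjection A).2 fun y hy x hx ↦ ?_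
  rw [h.2.2] at hx ⊢
  have hax : a x = 0 := hx
  show a (y x) = 0
  simpa [hax] using congrArg (· x) (VonNeumannAlgebra.mem_commutant_iff.1 hy a ha)

end IsOrthProjOnto

theorem VonNeumannAlgebra.rpow_mem {A : VonNeumannAlgebra H} {a : H →L[ℂ] H} (ha : a ∈ A)
    (y : ℝ) : a ^ y ∈ A := by
  rw [← A.commutant_commutant, VonNeumannAlgebra.mem_commutant_iff]
  intro g hg
  exact ((Commute.cfc_nnreal (VonNeumannAlgebra.mem_commutant_iff.1 hg a ha) _).eq).symm

section Subspaces

variable {𝕜 E G G' : Type*} [RCLike 𝕜] [NormedAddCommGroup E] [InnerProductSpace 𝕜 E]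
  [AddCommGroup G] [Module 𝕜 G] [AddCommGroup G'] [Module 𝕜 G']

theorem LinearMap.injOn_orthogonal_ker (f : E →ₗ[𝕜] G) :
    Set.InjOn f ((LinearMap.ker f)ᗮ : Set E) := by
  intro x hx y hy hxy
  have hmem : x - y ∈ LinearMap.ker f ⊓ (LinearMap.ker f)ᗮ :=
    ⟨by simp [hxy], Submodule.sub_mem _ hx hy⟩
  rwa [Submodule.inf_orthogonal_eq_bot, Submodule.mem_bot, sub_eq_zero] at hmem

theorem ContinuousLinearMap.map_ker_comp_inf_orthogonal_ker [CompleteSpace E] [TopologicalSpace G]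
    [T1Space G] (f : E →L[𝕜] G) (g : G →ₗ[𝕜] G') :
    (LinearMap.ker (g ∘ₗ f) ⊓ (LinearMap.ker (f : E →ₗ[𝕜] G))ᗮ).map (f : E →ₗ[𝕜] G) =
      LinearMap.ker g ⊓ LinearMap.range (f : E →ₗ[𝕜] G) := by
  have : CompleteSpace (LinearMap.ker (f : E →ₗ[𝕜] G)) := f.isClosed_ker.completeSpace_coe
  refine le_antisymm ?_ ?_
  · rintro _ ⟨x, ⟨hx, -⟩, rfl⟩
    exact ⟨hx, x, rfl⟩
  · rintro _ ⟨hy, x, rfl⟩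
    obtain ⟨a, ha, b, hb, rfl⟩ := (LinearMap.ker (f : E →ₗ[𝕜] G)).exists_add_mem_mem_orthogonal x
    have hfa : f a = 0 := ha
    have hfb : f (a + b) = f b := by simp [hfa]
    refine ⟨b, ⟨?_, hb⟩, hfb.symm⟩
    simpa [hfb] using hy

end Subspaces

theorem ContinuousLinearMap.exists_norm_le_mul_norm_of_injOn {𝕜 E G : Type*}
    [NontriviallyNormedField 𝕜] [NormedAddCommGroup E] [NormedSpace 𝕜 E] [CompleteSpace E]
    [NormedAddCommGroup G] [NormedSpace 𝕜 G] [CompleteSpace G] {f : E →L[𝕜] G}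
    {W : Submodule 𝕜 E} (hW : IsClosed (W : Set E)) (hinj : Set.InjOn f W)
    (himage : IsClosed (f '' W)) : ∃ c : ℝ≥0, ∀ x ∈ W, ‖x‖ ≤ c * ‖f x‖ := by
  have : CompleteSpace W := hW.completeSpace_coe
  have hrange : Set.range (f ∘L W.subtypeL) = f '' W := by
    rw [coe_comp, Set.range_comp, Submodule.coe_subtypeL, Submodule.coe_subtype, Subtype.range_coe]
  obtain ⟨c, hc⟩ := (f ∘L W.subtypeL).antilipschitz_of_injective_of_isClosed_range
    (fun x y hxy ↦ Subtype.ext (hinj x.2 y.2 hxy)) (hrange ▸ himage)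
  exact ⟨c, fun x hx ↦ hc.le_mul_norm (map_zero _) ⟨x, hx⟩⟩

namespace ContinuousLinearMap

theorem re_inner_star_mul_self_apply (T : H →L[ℂ] H) (x : H) :
    RCLike.re (inner ℂ ((star T * T) x) x) = ‖T x‖ ^ 2 := by
  rw [apply_norm_sq_eq_inner_adjoint_left, star_eq_adjoint]
  rfl

variable {T P : H →L[ℂ] H}

theorem isStrictlyPositive_star_mul_self_add_one_sub (hP : IsStarProjection P) {c : ℝ≥0}
    (hc : ∀ x, ‖P x‖ ≤ c * ‖T x‖) : IsStrictlyPositive (star T * T + (1 - P)) := by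
  have hQ := hP.one_sub
  have star_mul_self_eq : ∀ R : H →L[ℂ] H, IsStarProjection R → star R * R = R := fun R hR ↦ by
    rw [hR.isSelfAdjoint.star_eq, hR.isIdempotentElem.eq]
  have hpyth : ∀ x, ‖x‖ ^ 2 = ‖P x‖ ^ 2 + ‖(1 - P) x‖ ^ 2 := fun x ↦ by
    rw [← re_inner_star_mul_self_apply, ← re_inner_star_mul_self_apply, star_mul_self_eq P hP,
      star_mul_self_eq _ hQ, ← map_add, ← inner_add_left, ← add_apply, add_sub_cancel,
      one_apply_eq_self, inner_self_eq_norm_sq]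
  have hre : ∀ x, RCLike.re (inner ℂ ((star T * T + (1 - P)) x) x) =
      ‖T x‖ ^ 2 + ‖(1 - P) x‖ ^ 2 := fun x ↦ by
    nth_rw 1 [← star_mul_self_eq _ hQ]
    rw [add_apply, inner_add_left, map_add, re_inner_star_mul_self_apply,
      re_inner_star_mul_self_apply]
  refine IsStrictlyPositive.iff_of_unital.2 ⟨add_nonneg (star_mul_self_nonneg T) hQ.nonneg,
    isUnit_of_forall_le_norm_inner_map _ (c := (1 + c ^ 2)⁻¹) (by positivity) fun x ↦ ?_⟩
  have hPx : ‖P x‖ ^ 2 ≤ c ^ 2 * ‖T x‖ ^ 2 := by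
    rw [← mul_pow]; exact pow_le_pow_left₀ (norm_nonneg _) (hc x) 2
  calc ‖x‖ ^ 2 * ((1 + c ^ 2)⁻¹ : ℝ≥0) ≤ ‖T x‖ ^ 2 + ‖(1 - P) x‖ ^ 2 := by
        rw [hpyth, NNReal.coe_inv, NNReal.coe_add, NNReal.coe_one, NNReal.coe_pow,
          mul_inv_le_iff₀ (by positivity)]
        nlinarith [sq_nonneg (‖T x‖), sq_nonneg c, sq_nonneg ‖(1 - P) x‖]
    _ = RCLike.re (inner ℂ ((star T * T + (1 - P)) x) x) := (hre x).symm
    _ ≤ ‖inner ℂ ((star T * T + (1 - P)) x) x‖ := RCLike.re_le_norm _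

/-- When `P` is the support projection of `T`, this is the partial isometry of the polar
decomposition of `T`. -/
noncomputable def polarPart (T P : H →L[ℂ] H) : H →L[ℂ] H :=
  T * (star T * T + (1 - P)) ^ (-(1 / 2) : ℝ)

theorem commute_rpow_star_mul_self_add_one_sub (hP : IsStarProjection P) (hTP : T * P = T)
    (y : ℝ) : Commute ((star T * T + (1 - P)) ^ y) P := by
  have hPT : P * star T = star T := by
    rw [← hP.isSelfAdjoint.star_eq, ← star_mul, hTP]
  refine Commute.cfc_nnreal (show _ * P = P * _ from ?_) _
  rw [add_mul, mul_add, sub_mul, mul_sub, mul_assoc, hTP, ← mul_assoc, hPT,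
    hP.isIdempotentElem.eq, one_mul, mul_one, sub_self]

theorem polarPart_mul_eq_self (hP : IsStarProjection P) (hTP : T * P = T) :
    polarPart T P * P = polarPart T P := by
  rw [polarPart, mul_assoc, (commute_rpow_star_mul_self_add_one_sub hP hTP _).eq, ← mul_assoc, hTP]

theorem star_polarPart_mul_self (hP : IsStarProjection P) (hTP : T * P = T) {c : ℝ≥0}
    (hc : ∀ x, ‖P x‖ ≤ c * ‖T x‖) : star (polarPart T P) * polarPart T P = P := by
  set S := star T * T + (1 - P)
  have hS : IsStrictlyPositive S := isStrictlyPositive_star_mul_self_add_one_sub hP hc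
  have hSP : S * P = star T * T := by
    rw [add_mul, sub_mul, one_mul, hP.isIdempotentElem.eq, sub_self, add_zero, mul_assoc, hTP]
  have hcomm : Commute (S ^ (-(1 / 2) : ℝ)) P := commute_rpow_star_mul_self_add_one_sub hP hTP _
  calc star (polarPart T P) * polarPart T P
      = S ^ (-(1 / 2) : ℝ) * (S * P) * S ^ (-(1 / 2) : ℝ) := by
        rw [polarPart, star_mul, CFC.rpow_nonneg.isSelfAdjoint.star_eq, hSP]
        simp only [mul_assoc]
        rfl
    _ = S ^ (-(1 / 2) : ℝ) * S * S ^ (-(1 / 2) : ℝ) * P := by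
        simp only [mul_assoc, hcomm.eq]
    _ = P := by rw [CFC.conjugate_rpow_neg_one_half S, one_mul]

theorem range_polarPart (hP : IsStarProjection P) {c : ℝ≥0} (hc : ∀ x, ‖P x‖ ≤ c * ‖T x‖) :
    LinearMap.range (polarPart T P : H →ₗ[ℂ] H) = LinearMap.range (T : H →ₗ[ℂ] H) := by
  have hS := isStrictlyPositive_star_mul_self_add_one_sub hP hc
  have hunit : IsUnit ((star T * T + (1 - P)) ^ (-(1 / 2) : ℝ)) :=
    (CFC.isUnit_rpow_iff _ _ (by norm_num) hS.nonneg).2 hS.isUnit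
  exact LinearMap.range_comp_of_range_eq_top _
    (LinearMap.range_eq_top.2 (isUnit_iff_bijective.1 hunit).2)

theorem isOrthProjOnto_polarPart_mul_star (hP : IsStarProjection P) (hTP : T * P = T)
    {c : ℝ≥0} (hc : ∀ x, ‖P x‖ ≤ c * ‖T x‖) :
    IsOrthProjOnto (polarPart T P * star (polarPart T P)) (LinearMap.range (T : H →ₗ[ℂ] H)) := by
  set v := polarPart T P
  have hvv : v * star v * v = v := by
    rw [mul_assoc, star_polarPart_mul_self hP hTP hc, polarPart_mul_eq_self hP hTP]
  refine ⟨by rw [← mul_assoc, hvv], (IsSelfAdjoint.mul_star_self v).star_eq, ?_⟩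
  rw [← range_polarPart hP hc]
  refine le_antisymm (LinearMap.range_comp_le_range _ _) ?_
  rintro _ ⟨x, rfl⟩
  exact ⟨v x, congrArg (· x) hvv⟩

theorem polarPart_mem {A : VonNeumannAlgebra H} (hT : T ∈ A) (hP : P ∈ A) :
    polarPart T P ∈ A :=
  mul_mem hT (VonNeumannAlgebra.rpow_mem
    (add_mem (mul_mem (star_mem hT) hT) (sub_mem (one_mem A) hP)) _)

end ContinuousLinearMap

theorem kernel_quotient_equiv_general (A : VonNeumannAlgebra H) (D F : H →L[ℂ] H)
    (hD : D ∈ A) (hF : F ∈ A) :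
    Set.InjOn F ((LinearMap.ker ((D * F : H →L[ℂ] H) : H →ₗ[ℂ] H) ⊓ (LinearMap.ker (F : H →ₗ[ℂ] H))ᗮ : Submodule ℂ H) : Set H) ∧
    F '' ((LinearMap.ker ((D * F : H →L[ℂ] H) : H →ₗ[ℂ] H) ⊓ (LinearMap.ker (F : H →ₗ[ℂ] H))ᗮ : Submodule ℂ H) : Set H) =
      ((LinearMap.ker (D : H →ₗ[ℂ] H) ⊓ LinearMap.range (F : H →ₗ[ℂ] H) : Submodule ℂ H) : Set H) ∧
    (∀ PW PK PkDF PkF : H →L[ℂ] H,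
      IsOrthProjOnto PW (LinearMap.ker ((D * F : H →L[ℂ] H) : H →ₗ[ℂ] H) ⊓ (LinearMap.ker (F : H →ₗ[ℂ] H))ᗮ) →
      IsOrthProjOnto PK (LinearMap.ker (D : H →ₗ[ℂ] H) ⊓ LinearMap.range (F : H →ₗ[ℂ] H)) →
      IsOrthProjOnto PkDF (LinearMap.ker ((D * F : H →L[ℂ] H) : H →ₗ[ℂ] H)) →
      IsOrthProjOnto PkF (LinearMap.ker (F : H →ₗ[ℂ] H)) →
      PW = PkDF - PkF ∧ MvN (A : Set (H →L[ℂ] H)) PW PK) := by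
  have hinj := (LinearMap.injOn_orthogonal_ker (F : H →ₗ[ℂ] H)).mono
    (inf_le_right (a := LinearMap.ker ((D * F : H →L[ℂ] H) : H →ₗ[ℂ] H)))
  have hmap := F.map_ker_comp_inf_orthogonal_ker (D : H →ₗ[ℂ] H)
  have himage := (Submodule.map_coe _ _).symm.trans (congrArg SetLike.coe hmap)
  refine ⟨hinj, himage, fun PW PK PkDF PkF hPW hPK hPkDF hPkF ↦ ?_⟩
  have hPW_eq : PW = PkDF - PkF :=
    hPW.unique (hPkDF.sub hPkF (LinearMap.ker_le_ker_comp _ _))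
  have hPW_mem : PW ∈ A :=
    hPW_eq ▸ sub_mem (hPkDF.mem_of_ker (mul_mem hD hF)) (hPkF.mem_of_ker hF)
  obtain ⟨c, hc⟩ := exists_norm_le_mul_norm_of_injOn hPW.isClosed hinj (himage ▸ hPK.isClosed)
  have hTP : F * PW * PW = F * PW := by rw [mul_assoc, hPW.1]
  have hcT : ∀ x, ‖PW x‖ ≤ c * ‖(F * PW) x‖ := fun x ↦ hc _ (hPW.apply_mem x)
  have hrange : LinearMap.range ((F * PW : H →L[ℂ] H) : H →ₗ[ℂ] H) =
      LinearMap.ker (D : H →ₗ[ℂ] H) ⊓ LinearMap.range (F : H →ₗ[ℂ] H) := by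
    rw [toLinearMap_mul, Module.End.mul_eq_comp, LinearMap.range_comp, hPW.2.2]
    exact hmap
  refine ⟨hPW_eq, star (polarPart (F * PW) PW),
    star_mem (polarPart_mem (mul_mem hF hPW_mem) hPW_mem), ?_, ?_⟩
  · rw [star_star, star_polarPart_mul_self hPW.isStarProjection hTP hcT]
  · rw [star_star]
    exact (isOrthProjOnto_polarPart_mul_star hPW.isStarProjection hTP hcT).unique (hrange ▸ hPK)

theorem kernel_quotient_equiv (A : VonNeumannAlgebra H) (D F : H →L[ℂ] H)
    (hD : D ∈ A) (hF : F ∈ A)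
    (hranF : IsClosed (LinearMap.range (F : H →ₗ[ℂ] H) : Set H))
    (hranD : IsClosed (LinearMap.range (D : H →ₗ[ℂ] H) : Set H))
    (hranDF : IsClosed (LinearMap.range ((D * F : H →L[ℂ] H) : H →ₗ[ℂ] H) : Set H)) :
    Set.InjOn F ((LinearMap.ker ((D * F : H →L[ℂ] H) : H →ₗ[ℂ] H) ⊓ (LinearMap.ker (F : H →ₗ[ℂ] H))ᗮ : Submodule ℂ H) : Set H) ∧
    F '' ((LinearMap.ker ((D * F : H →L[ℂ] H) : H →ₗ[ℂ] H) ⊓ (LinearMap.ker (F : H →ₗ[ℂ] H))ᗮ : Submodule ℂ H) : Set H) =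
      ((LinearMap.ker (D : H →ₗ[ℂ] H) ⊓ LinearMap.range (F : H →ₗ[ℂ] H) : Submodule ℂ H) : Set H) ∧
    (∀ PW PK PkDF PkF : H →L[ℂ] H,
      IsOrthProjOnto PW (LinearMap.ker ((D * F : H →L[ℂ] H) : H →ₗ[ℂ] H) ⊓ (LinearMap.ker (F : H →ₗ[ℂ] H))ᗮ) →
      IsOrthProjOnto PK (LinearMap.ker (D : H →ₗ[ℂ] H) ⊓ LinearMap.range (F : H →ₗ[ℂ] H)) →
      IsOrthProjOnto PkDF (LinearMap.ker ((D * F : H →L[ℂ] H) : H →ₗ[ℂ] H)) →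
      IsOrthProjOnto PkF (LinearMap.ker (F : H →ₗ[ℂ] H)) →
      PW = PkDF - PkF ∧ MvN (A : Set (H →L[ℂ] H)) PW PK) :=
  kernel_quotient_equiv_general A D F hD hF
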